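/- arXiv:1211.3715 — 5 statements merged into one kernel-verified Lean document; each statement's English description precedes it below -/
import Mathlib

section
/- Let A ⊆ ℝⁿ be a lattice polytope (the convex hull of a finite subset of ℤⁿ) of dimension n, with n ≥ 1. Then the dilated polytope (n−1)·A is normal: for every integer k ≥ 1, every lattice point of k·((n−1)·A) is a sum of k lattice points of (n−1)·A. -/
/-!
By Carathéodory, a lattice point of `k (n - 1) A` lies in `k (n - 1) Δ` for a lattice simplex
`Δ ⊆ A`, so it suffices to show that `c Δ` is normal when `Δ` has at most `c + 2` vertices.
In barycentric coordinates a lattice point of `N Δ`, `N ≥ 2c`, has weights `μ = ⌊μ⌋ + fract μ`,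
and `∑ fract μ` is an integer `s ≤ c + 1`. If `s ≤ c`, topping `fract μ` up by integer weights
below `⌊μ⌋` gives a lattice point of `c Δ` below the given one, and the rest lies in `(N - c) Δ`.
If `s = c + 1`, the weights `fract (k μ)` also give lattice points, so `μ` has a finite order `d`
mod `ℤ`, and counting produces `1 < k < d` with `fract (k μ) ≤ fract μ` and
`1 ≤ ∑ fract (k μ) ≤ c`, which then takes the place of `fract μ`.
-/

open scoped Pointwise

noncomputable section

/-- The coercion of an integer lattice point to a real point. -/
def coeR {n : ℕ} (v : Fin n → ℤ) : Fin n → ℝ := fun i => (v i : ℝ)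

/-- A lattice polytope `P ⊆ ℝⁿ` is normal if for every integer `k ≥ 1`, every
lattice point of `k·P` is a sum of `k` lattice points of `P`. -/
def IsNormal {n : ℕ} (P : Set (Fin n → ℝ)) : Prop :=
  ∀ k : ℕ, 1 ≤ k → ∀ v : Fin n → ℤ, coeR v ∈ (k : ℝ) • P →
    ∃ w : Fin k → (Fin n → ℤ), (∀ j, coeR (w j) ∈ P) ∧ ∑ j, w j = v

open Finset

section coeR

variable {n : ℕ}

theorem coeR_injective : Function.Injective (coeR (n := n)) := fun a b h =>
  funext fun i => by simpa [coeR] using congrFun h i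

@[simp] theorem coeR_zero : coeR (0 : Fin n → ℤ) = 0 := by
  funext i; simp [coeR]

@[simp] theorem coeR_add (a b : Fin n → ℤ) : coeR (a + b) = coeR a + coeR b := by
  funext i; simp [coeR]

@[simp] theorem coeR_sub (a b : Fin n → ℤ) : coeR (a - b) = coeR a - coeR b := by
  funext i; simp [coeR]

theorem coeR_sum_zsmul {ι : Type*} (s : Finset ι) (a : ι → ℤ) (p : ι → Fin n → ℤ) :
    coeR (∑ i ∈ s, a i • p i) = ∑ i ∈ s, (a i : ℝ) • coeR (p i) := by
  funext j; simp [coeR]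

end coeR

section IntegralWeights

variable {ι : Type*} [Fintype ι] {n : ℕ} (p : ι → Fin n → ℤ)

/-- The lattice points of the cone over the simplex with vertices `p i`, in barycentric
coordinates. -/
def integralWeights : AddSubgroup (ι → ℝ) where
  carrier := {w | (∃ j : ℤ, ∑ i, w i = j) ∧ ∃ z, ∑ i, w i • coeR (p i) = coeR z}
  add_mem' := by
    rintro w w' ⟨⟨j, hj⟩, z, hz⟩ ⟨⟨j', hj'⟩, z', hz'⟩
    refine ⟨⟨j + j', ?_⟩, z + z', ?_⟩
    · simp [sum_add_distrib, hj, hj']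
    · simp [add_smul, sum_add_distrib, hz, hz']
  zero_mem' := ⟨⟨0, by simp⟩, 0, by simp⟩
  neg_mem' := by
    rintro w ⟨⟨j, hj⟩, z, hz⟩
    refine ⟨⟨-j, ?_⟩, -z, ?_⟩
    · simp [hj]
    · simp only [Pi.neg_apply, neg_smul, sum_neg_distrib, hz]
      funext i; simp [coeR]

variable {p}

theorem mem_integralWeights {w : ι → ℝ} : w ∈ integralWeights p ↔
    (∃ j : ℤ, ∑ i, w i = j) ∧ ∃ z, ∑ i, w i • coeR (p i) = coeR z :=
  Iff.rfl

theorem intCast_mem_integralWeights (a : ι → ℤ) :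
    (fun i => (a i : ℝ)) ∈ integralWeights p :=
  ⟨⟨∑ i, a i, by push_cast; rfl⟩, ∑ i, a i • p i, by rw [coeR_sum_zsmul]⟩

theorem fract_mul_mem_integralWeights {w : ι → ℝ} (hw : w ∈ integralWeights p) (k : ℕ) :
    (fun i => Int.fract (k * w i)) ∈ integralWeights p := by
  have hfract : (fun i => Int.fract (k * w i)) = k • w - fun i => ((⌊k * w i⌋ : ℤ) : ℝ) := by
    funext i; rw [Pi.sub_apply, Pi.smul_apply, nsmul_eq_mul, Int.self_sub_floor]
  rw [hfract]
  exact sub_mem (nsmul_mem hw k) (intCast_mem_integralWeights _)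

theorem AffineIndependent.eq_of_sum_eq_of_sum_smul_eq (hp : AffineIndependent ℝ (coeR ∘ p))
    {w w' : ι → ℝ} (h₁ : ∑ i, w i = ∑ i, w' i)
    (h₂ : ∑ i, w i • coeR (p i) = ∑ i, w' i • coeR (p i)) : w = w' := by
  funext i
  rw [← sub_eq_zero]
  refine affineIndependent_iff.1 hp univ (w - w') ?_ ?_ i (mem_univ i)
  · simp [sum_sub_distrib, h₁]
  · simp [sub_smul, sum_sub_distrib, h₂]

end IntegralWeights

section Periodicity

variable {ι : Type*}

theorem nsmul_coe_eq_zero_iff (w : ι → ℝ) (k : ℕ) :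
    k • ((↑) ∘ w : ι → UnitAddCircle) = 0 ↔ ∀ i, Int.fract (k * w i) = 0 := by
  simp only [funext_iff, Pi.smul_apply, Function.comp_apply, Pi.zero_apply, ← AddCircle.coe_nsmul,
    AddCircle.coe_eq_zero_iff, Int.fract_eq_zero_iff, nsmul_eq_mul, zsmul_eq_mul, mul_one,
    Set.mem_range]

theorem nsmul_coe_eq_coe_fract (w : ι → ℝ) (k : ℕ) :
    k • ((↑) ∘ w : ι → UnitAddCircle) = (↑) ∘ fun i => Int.fract (k * w i) := by
  funext i
  simp only [Pi.smul_apply, Function.comp_apply, ← AddCircle.coe_nsmul, nsmul_eq_mul,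
    AddCircle.coe_fract]

variable [Fintype ι] {n : ℕ} {p : ι → Fin n → ℤ}

theorem abs_sum_fract_mul_le (w : ι → ℝ) (a : ι → ℤ) (k : ℕ) :
    |∑ i, Int.fract (k * w i) * (a i : ℝ)| ≤ ∑ i, |(a i : ℝ)| := by
  refine (abs_sum_le_sum_abs _ _).trans (sum_le_sum fun i _ => ?_)
  rw [abs_mul, abs_of_nonneg (Int.fract_nonneg _)]
  exact mul_le_of_le_one_left (abs_nonneg _) (Int.fract_lt_one _).le

/-- The multiples `k • w` reduced mod `1` give lattice points in a bounded region, which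
by affine independence determine them; so only finitely many residues occur. -/
theorem isOfFinAddOrder_coe (hp : AffineIndependent ℝ (coeR ∘ p)) {w : ι → ℝ}
    (hw : w ∈ integralWeights p) : IsOfFinAddOrder ((↑) ∘ w : ι → UnitAddCircle) := by
  choose j hj using fun k : ℕ => (mem_integralWeights.1 (fract_mul_mem_integralWeights hw k)).1
  choose z hz using fun k : ℕ => (mem_integralWeights.1 (fract_mul_mem_integralWeights hw k)).2
  set C : Fin n → ℤ := fun a => ∑ i, |p i a|
  have hbound (k : ℕ) : (j k, z k) ∈ Set.Icc 0 (Fintype.card ι : ℤ) ×ˢ Set.Icc (-C) C := by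
    have hjk : (0 : ℝ) ≤ j k ∧ (j k : ℝ) ≤ Fintype.card ι := by
      rw [← hj k]
      refine ⟨sum_nonneg fun i _ => Int.fract_nonneg _, ?_⟩
      simpa using sum_le_sum fun i (_ : i ∈ univ) => (Int.fract_lt_one (k * w i)).le
    have hzk (a : Fin n) : |z k a| ≤ C a := by
      have h := congrFun (hz k) a
      simp only [coeR, Finset.sum_apply, Pi.smul_apply, smul_eq_mul] at h
      have := abs_sum_fract_mul_le w (fun i => p i a) k
      rw [h] at this
      exact_mod_cast this
    refine ⟨⟨?_, ?_⟩, fun a => neg_le_of_abs_le (hzk a), fun a => le_of_abs_le (hzk a)⟩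
    · exact_mod_cast hjk.1
    · exact_mod_cast hjk.2
  obtain ⟨a, b, hab, hjz⟩ :=
    ((Set.finite_Icc _ _).prod (Set.finite_Icc _ _)).exists_lt_map_eq_of_forall_mem hbound
  have hfract : (fun i => Int.fract (a * w i)) = fun i => Int.fract (b * w i) := by
    refine hp.eq_of_sum_eq_of_sum_smul_eq ?_ ?_
    · simpa [hj] using congrArg Prod.fst hjz
    · simp only [hz]
      exact congrArg (fun q => coeR q.2) hjz
  refine isOfFinAddOrder_iff_nsmul_eq_zero.2 ⟨b - a, Nat.sub_pos_of_lt hab, ?_⟩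
  rw [sub_nsmul _ hab.le, ← sub_eq_add_neg, sub_eq_zero, nsmul_coe_eq_coe_fract,
    nsmul_coe_eq_coe_fract, hfract]

end Periodicity

section Counting

/-- Each `k < d` at which `⌊k r⌋ < ⌊(k + 1) r⌋` (there are `⌊d r⌋` of them, the floors
increasing by at most one) has `fract ((k + 1) r) < r`, and so has `k = 0`. -/
theorem floor_mul_add_one_le_card_filter_fract_le {r : ℝ} (hr0 : 0 ≤ r) (hr1 : r < 1) {d : ℕ}
    (hd : 0 < d) : ⌊(d : ℝ) * r⌋ + 1 ≤ #{k ∈ range d | Int.fract (((k + 1 : ℕ) : ℝ) * r) ≤ r} := by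
  set carries := {k ∈ range d | ⌊((k : ℕ) : ℝ) * r⌋ < ⌊((k + 1 : ℕ) : ℝ) * r⌋}
  have hcarries : ⌊(d : ℝ) * r⌋ ≤ #carries := by
    have htel := sum_range_sub (fun k : ℕ => ⌊(k : ℝ) * r⌋) d
    push_cast at htel
    rw [zero_mul, Int.floor_zero, sub_zero] at htel
    rw [← htel, card_filter, Nat.cast_sum]
    refine sum_le_sum fun k _ => ?_
    split_ifs with hk <;> push_cast at hk ⊢
    · have : ⌊(k + 1 : ℝ) * r⌋ < ⌊(k : ℝ) * r⌋ + 2 := by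
        rw [Int.floor_lt]
        push_cast
        linarith [Int.lt_floor_add_one ((k : ℝ) * r)]
      omega
    · omega
  have hsub : insert 0 carries ⊆ {k ∈ range d | Int.fract (((k + 1 : ℕ) : ℝ) * r) ≤ r} := by
    intro k hk
    rw [mem_insert] at hk
    rcases hk with rfl | hk
    · simp [hd, Int.fract_eq_self.2 ⟨hr0, hr1⟩]
    · obtain ⟨hkd, hk⟩ := mem_filter.1 hk
      refine mem_filter.2 ⟨hkd, ?_⟩
      have hcarry : ((⌊(k : ℝ) * r⌋ + 1 : ℤ) : ℝ) ≤ ⌊((k + 1 : ℕ) : ℝ) * r⌋ := by exact_mod_cast hk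
      push_cast at hcarry ⊢
      rw [← Int.self_sub_floor]
      linarith [Int.lt_floor_add_one ((k : ℝ) * r)]
  have hzero : 0 ∉ carries := by
    simp [carries, Int.floor_eq_zero_iff.2 ⟨hr0, hr1⟩]
  have := card_le_card hsub
  rw [card_insert_of_notMem hzero] at this
  omega

theorem card_le_card_filter_forall_add_sum {α ι : Type*} [Fintype ι] [DecidableEq α]
    (s : Finset α) (P : ι → α → Prop) [∀ i, DecidablePred (P i)] :
    #s ≤ #{a ∈ s | ∀ i, P i a} + ∑ i, #{a ∈ s | ¬ P i a} := by
  have hcover : s ⊆ {a ∈ s | ∀ i, P i a} ∪ univ.biUnion fun i => {a ∈ s | ¬ P i a} := by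
    intro a ha
    by_cases h : ∀ i, P i a
    · exact mem_union_left _ (mem_filter.2 ⟨ha, h⟩)
    · obtain ⟨i, hi⟩ := not_forall.1 h
      exact mem_union_right _ (mem_biUnion.2 ⟨i, mem_univ i, mem_filter.2 ⟨ha, hi⟩⟩)
  exact (card_le_card hcover).trans ((card_union_le _ _).trans (add_le_add_right card_biUnion_le _))

/-- At most `d - d f i - 1` values of `k` fail for `i`, and these bounds add up to `d - card ι`. -/
theorem card_le_card_filter_forall_fract_mul_le {ι : Type*} [Fintype ι] {f : ι → ℝ}
    (hf0 : ∀ i, 0 ≤ f i) (hf1 : ∀ i, f i < 1) (hsum : ∑ i, f i = Fintype.card ι - 1) {d : ℕ}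
    (hd : 0 < d) (hdf : ∀ i, (⌊(d : ℝ) * f i⌋ : ℝ) = d * f i) :
    Fintype.card ι ≤ #{k ∈ range d | ∀ i, Int.fract (((k + 1 : ℕ) : ℝ) * f i) ≤ f i} := by
  have hcover := card_le_card_filter_forall_add_sum (range d)
    fun i (k : ℕ) => Int.fract (((k + 1 : ℕ) : ℝ) * f i) ≤ f i
  have hbad (i : ι) : (#{k ∈ range d | ¬ Int.fract (((k + 1 : ℕ) : ℝ) * f i) ≤ f i} : ℝ) ≤
      d - d * f i - 1 := by
    have hcount := floor_mul_add_one_le_card_filter_fract_le (hf0 i) (hf1 i) hd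
    have hsplit := card_filter_add_card_filter_not (s := range d)
      fun k : ℕ => Int.fract (((k + 1 : ℕ) : ℝ) * f i) ≤ f i
    rw [card_range] at hsplit
    have hcount' : (⌊(d : ℝ) * f i⌋ : ℝ) + 1 ≤ #{k ∈ range d |
        Int.fract (((k + 1 : ℕ) : ℝ) * f i) ≤ f i} := by exact_mod_cast hcount
    have hsplit' : (#{k ∈ range d | Int.fract (((k + 1 : ℕ) : ℝ) * f i) ≤ f i} : ℝ) +
        #{k ∈ range d | ¬ Int.fract (((k + 1 : ℕ) : ℝ) * f i) ≤ f i} = d := by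
      exact_mod_cast hsplit
    linarith [hdf i]
  have hsumbad := sum_le_sum fun i (_ : i ∈ univ) => hbad i
  rw [sum_sub_distrib, sum_sub_distrib, ← mul_sum, hsum] at hsumbad
  simp only [sum_const, card_univ, nsmul_eq_mul, mul_one] at hsumbad
  rw [card_range] at hcover
  have hcover' : (d : ℝ) ≤ #{k ∈ range d | ∀ i, Int.fract (((k + 1 : ℕ) : ℝ) * f i) ≤ f i} +
      ∑ i, (#{k ∈ range d | ¬ Int.fract (((k + 1 : ℕ) : ℝ) * f i) ≤ f i} : ℝ) := by
    exact_mod_cast hcover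
  have : (Fintype.card ι : ℝ) ≤
      #{k ∈ range d | ∀ i, Int.fract (((k + 1 : ℕ) : ℝ) * f i) ≤ f i} := by
    linarith
  exact_mod_cast this

theorem exists_le_sum_eq {ι : Type*} [Fintype ι] [DecidableEq ι] (F : ι → ℕ) {t : ℕ}
    (ht : t ≤ ∑ i, F i) : ∃ g ≤ F, ∑ i, g i = t := by
  induction t with
  | zero => exact ⟨0, fun _ => Nat.zero_le _, by simp⟩
  | succ t ih =>
    obtain ⟨g, hgF, hg⟩ := ih (by omega)
    obtain ⟨i, -, hi⟩ : ∃ i ∈ univ, g i < F i := by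
      by_contra! hcon
      have := sum_le_sum hcon
      omega
    refine ⟨g + Pi.single i 1, fun j => ?_, by simp [sum_add_distrib, hg]⟩
    rcases eq_or_ne j i with rfl | hj
    · simpa using hi
    · simpa [hj] using hgF j

end Counting

section Splitting

variable {ι : Type*} [Fintype ι] {n : ℕ} {p : ι → Fin n → ℤ}

/-- With `d` the order of `f` mod `1`, at least `card ι ≥ 3` values `k ≤ d`, among them `1` and
`d`, have `fract (k f) ≤ f`. For a third one, `fract (k f)` is neither `0` nor `f` by the
minimality of `d`. -/
theorem exists_fract_mul_le_of_sum_eq_card_sub_one (hp : AffineIndependent ℝ (coeR ∘ p))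
    {f : ι → ℝ} (hf : f ∈ integralWeights p) (hf0 : ∀ i, 0 ≤ f i) (hf1 : ∀ i, f i < 1)
    (hsum : ∑ i, f i = Fintype.card ι - 1) (hcard : 3 ≤ Fintype.card ι) :
    ∃ k : ℕ, (∀ i, Int.fract (k * f i) ≤ f i) ∧
      ∃ h : ℤ, ∑ i, Int.fract (k * f i) = h ∧ 1 ≤ h ∧ h + 2 ≤ Fintype.card ι := by
  set g : ι → UnitAddCircle := (↑) ∘ f
  set d := addOrderOf g
  have hd : 0 < d := (isOfFinAddOrder_coe hp hf).addOrderOf_pos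
  have hdf (i : ι) : (⌊(d : ℝ) * f i⌋ : ℝ) = d * f i := by
    have := (nsmul_coe_eq_zero_iff f d).1 (addOrderOf_nsmul_eq_zero g) i
    rwa [← Int.self_sub_floor, sub_eq_zero, eq_comm] at this
  set good := {k ∈ range d | ∀ i, Int.fract (((k + 1 : ℕ) : ℝ) * f i) ≤ f i}
  have hgood : Fintype.card ι ≤ #good := card_le_card_filter_forall_fract_mul_le hf0 hf1 hsum hd hdf
  obtain ⟨k, hkgood, hk0, hkd⟩ : ∃ k ∈ good, k ≠ 0 ∧ k ≠ d - 1 := by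
    by_contra! hcon
    have : good ⊆ {0, d - 1} := fun k hk => by
      by_cases hk0 : k = 0
      · simp [hk0]
      · simp [hcon k hk hk0]
    have := (card_le_card this).trans card_le_two
    omega
  obtain ⟨hk_lt, hkle⟩ := mem_filter.1 hkgood
  rw [mem_range] at hk_lt
  obtain ⟨h, hh⟩ := (mem_integralWeights.1 (fract_mul_mem_integralWeights hf (k + 1))).1
  refine ⟨k + 1, hkle, h, hh, ?_, ?_⟩
  · by_contra! hlt
    have hzero : ∀ i, Int.fract (((k + 1 : ℕ) : ℝ) * f i) = 0 := by
      have h0 : h = 0 := by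
        have : (0 : ℝ) ≤ h := hh ▸ sum_nonneg fun i _ => Int.fract_nonneg _
        have : (0 : ℤ) ≤ h := by exact_mod_cast this
        omega
      rw [h0, Int.cast_zero, sum_eq_zero_iff_of_nonneg fun i _ => Int.fract_nonneg _] at hh
      exact fun i => hh i (mem_univ i)
    have : d ≤ k + 1 := Nat.le_of_dvd (Nat.succ_pos k)
      (addOrderOf_dvd_of_nsmul_eq_zero ((nsmul_coe_eq_zero_iff f _).2 hzero))
    omega
  · by_contra! hlt
    have hle : (Fintype.card ι : ℝ) - 1 ≤ h := by
      have : (Fintype.card ι : ℤ) - 1 ≤ h := by omega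
      exact_mod_cast this
    have heq := (sum_eq_sum_iff_of_le fun i (_ : i ∈ univ) => hkle i).1
      (le_antisymm (sum_le_sum fun i _ => hkle i) (by rw [hsum, hh]; exact hle))
    have hperiod : (k + 1) • g = g := by
      rw [nsmul_coe_eq_coe_fract]
      exact congrArg _ (funext fun i => heq i (mem_univ i))
    rw [succ_nsmul, add_eq_right] at hperiod
    have : d ≤ k := Nat.le_of_dvd (Nat.pos_of_ne_zero hk0) (addOrderOf_dvd_of_nsmul_eq_zero hperiod)
    omega

theorem exists_mem_integralWeights_le_of_le_fract {μ q : ι → ℝ} (hμ : 0 ≤ μ) (hq0 : 0 ≤ q)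
    (hqμ : ∀ i, q i ≤ Int.fract (μ i)) (hq : q ∈ integralWeights p) {c : ℕ} {h : ℤ}
    (hqsum : ∑ i, q i = h) (hhc : h ≤ c) (hcap : c ≤ h + ((∑ i, ⌊μ i⌋₊ : ℕ) : ℤ)) :
    ∃ β ∈ integralWeights p, 0 ≤ β ∧ β ≤ μ ∧ ∑ i, β i = c := by
  classical
  have hh : 0 ≤ h := by
    have : (0 : ℝ) ≤ h := hqsum ▸ sum_nonneg fun i _ => hq0 i
    exact_mod_cast this
  obtain ⟨t, htμ, ht⟩ := exists_le_sum_eq (fun i => ⌊μ i⌋₊) (t := (c - h).toNat) (by omega)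
  refine ⟨q + fun i => ((t i : ℤ) : ℝ), add_mem hq (intCast_mem_integralWeights _),
    fun i => add_nonneg (hq0 i) (by positivity), fun i => ?_, ?_⟩
  · have hfloor : (t i : ℝ) ≤ ⌊μ i⌋ := by
      rw [← natCast_floor_eq_intCast_floor (hμ i)]
      exact_mod_cast htμ i
    have := Int.floor_add_fract (μ i)
    simp only [Pi.add_apply, Int.cast_natCast]
    linarith [hqμ i]
  · have hct : ((c - h).toNat : ℝ) = c - h := by
      exact_mod_cast Int.toNat_of_nonneg (sub_nonneg.2 hhc)
    simp only [Pi.add_apply, sum_add_distrib, hqsum, Int.cast_natCast, ← Nat.cast_sum, ht, hct]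
    ring

theorem exists_mem_integralWeights_le (hp : AffineIndependent ℝ (coeR ∘ p)) {c : ℕ} (hc : 1 ≤ c)
    (hcard : Fintype.card ι ≤ c + 2) {μ : ι → ℝ} (hμ0 : 0 ≤ μ) (hμ : μ ∈ integralWeights p)
    {N : ℕ} (hN : ∑ i, μ i = N) (hcN : 2 * c ≤ N) :
    ∃ β ∈ integralWeights p, 0 ≤ β ∧ β ≤ μ ∧ ∑ i, β i = c := by
  set f := fun i => Int.fract (μ i)
  have hf : f ∈ integralWeights p := by simpa using fract_mul_mem_integralWeights hμ 1
  obtain ⟨s, hs⟩ := (mem_integralWeights.1 hf).1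
  have hfloor : ((∑ i, ⌊μ i⌋₊ : ℕ) : ℤ) = N - s := by
    have hsplit (i : ι) : μ i = ⌊μ i⌋₊ + f i := by
      rw [natCast_floor_eq_intCast_floor (hμ0 i), Int.floor_add_fract]
    have : (((∑ i, ⌊μ i⌋₊ : ℕ) : ℤ) : ℝ) = N - s := by
      push_cast
      rw [← hN, ← hs, ← sum_sub_distrib]
      exact sum_congr rfl fun i _ => eq_sub_of_add_eq (hsplit i).symm
    exact_mod_cast this
  rcases le_or_gt s c with hsc | hsc
  · exact exists_mem_integralWeights_le_of_le_fract hμ0 (fun i => Int.fract_nonneg _)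
      (fun i => le_rfl) hf hs hsc (by omega)
  have hs_lt : (s : ℝ) < Fintype.card ι := by
    have hne : (univ : Finset ι).Nonempty := by
      refine nonempty_of_sum_ne_zero (f := f) ?_
      rw [hs]
      exact_mod_cast (show s ≠ 0 by omega)
    rw [← hs]
    simpa using sum_lt_sum_of_nonempty hne fun i _ => Int.fract_lt_one (μ i)
  have hs_lt' : s < Fintype.card ι := by exact_mod_cast hs_lt
  have hs_eq : (s : ℝ) = Fintype.card ι - 1 := by
    have : s = Fintype.card ι - 1 := by omega
    exact_mod_cast this
  obtain ⟨k, hkf, h, hh, hh1, hh2⟩ := exists_fract_mul_le_of_sum_eq_card_sub_one hp hf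
    (fun i => Int.fract_nonneg _) (fun i => Int.fract_lt_one _) (hs.trans hs_eq) (by omega)
  exact exists_mem_integralWeights_le_of_le_fract hμ0 (fun i => Int.fract_nonneg _) hkf
    (fract_mul_mem_integralWeights hf k) hh (by omega) (by omega)

end Splitting

theorem mem_smul_convexHull_range_iff {ι E : Type*} [Fintype ι] [AddCommGroup E] [Module ℝ E]
    (z : ι → E) {t : ℝ} (ht : 0 < t) {y : E} :
    y ∈ t • convexHull ℝ (Set.range z) ↔
      ∃ w : ι → ℝ, 0 ≤ w ∧ ∑ i, w i = t ∧ ∑ i, w i • z i = y := by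
  classical
  rw [Set.mem_smul_set_iff_inv_smul_mem₀ ht.ne']
  constructor
  · rw [convexHull_range_eq_exists_affineCombination]
    rintro ⟨s, w, hw0, hw1, hy⟩
    rw [s.affineCombination_eq_linear_combination z w hw1] at hy
    refine ⟨fun i => if i ∈ s then t * w i else 0, fun i => ?_, ?_, ?_⟩
    · dsimp only
      split_ifs with hi
      exacts [mul_nonneg ht.le (hw0 i hi), le_rfl]
    · rw [sum_ite_mem, univ_inter, ← mul_sum, hw1, mul_one]
    · simp only [ite_smul, zero_smul, sum_ite_mem, univ_inter, mul_smul, ← smul_sum, hy,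
        smul_inv_smul₀ ht.ne']
  · rintro ⟨w, hw0, hw1, hy⟩
    refine mem_convexHull_of_exists_fintype (fun i => t⁻¹ * w i) z
      (fun i => mul_nonneg (inv_nonneg.2 ht.le) (hw0 i)) ?_ (fun i => Set.mem_range_self i) ?_
    · rw [← mul_sum, hw1, inv_mul_cancel₀ ht.ne']
    · simp only [mul_smul, ← smul_sum, hy]

section Simplex

variable {ι : Type*} [Fintype ι] {n : ℕ} {p : ι → Fin n → ℤ}

theorem isNormal_smul_convexHull (hp : AffineIndependent ℝ (coeR ∘ p)) {c : ℕ} (hc : 1 ≤ c)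
    (hcard : Fintype.card ι ≤ c + 2) :
    IsNormal ((c : ℝ) • convexHull ℝ (Set.range (coeR ∘ p))) := by
  intro k hk
  induction k, hk using Nat.le_induction with
  | base => exact fun v hv => ⟨fun _ => v, fun _ => by simpa using hv, by simp⟩
  | succ k hk ih =>
    intro v hv
    have hcpos : (0 : ℝ) < c := by exact_mod_cast hc
    rw [smul_smul, mem_smul_convexHull_range_iff _ (by positivity)] at hv
    obtain ⟨μ, hμ0, hμsum, hμv⟩ := hv
    have hμ : μ ∈ integralWeights p := ⟨⟨((k + 1) * c : ℕ), by rw [hμsum]; push_cast; ring⟩, v, hμv⟩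
    obtain ⟨β, hβ, hβ0, hβμ, hβsum⟩ := exists_mem_integralWeights_le hp hc hcard hμ0 hμ
      (N := (k + 1) * c) (by rw [hμsum]; push_cast; ring) (by nlinarith)
    obtain ⟨-, z, hz⟩ := hβ
    have hz_mem : coeR z ∈ (c : ℝ) • convexHull ℝ (Set.range (coeR ∘ p)) :=
      (mem_smul_convexHull_range_iff _ hcpos).2 ⟨β, hβ0, hβsum, hz⟩
    have hrest : coeR (v - z) ∈ (k : ℝ) • (c : ℝ) • convexHull ℝ (Set.range (coeR ∘ p)) := by
      rw [smul_smul, mem_smul_convexHull_range_iff _ (by positivity)]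
      refine ⟨μ - β, sub_nonneg.2 hβμ, ?_, ?_⟩
      · simp only [Pi.sub_apply, sum_sub_distrib, hμsum, hβsum]
        push_cast
        ring
      · simp only [Pi.sub_apply, sub_smul, sum_sub_distrib, Function.comp_apply, coeR_sub]
        rw [← hμv, ← hz]
        rfl
    obtain ⟨w, hw, hwsum⟩ := ih (v - z) hrest
    exact ⟨Fin.cons z w, Fin.cases hz_mem hw, by rw [Fin.sum_cons, hwsum, add_sub_cancel]⟩

end Simplex

theorem card_le_of_affineIndependent {ι : Type*} [Fintype ι] {n : ℕ} {p : ι → Fin n → ℤ}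
    (hp : AffineIndependent ℝ (coeR ∘ p)) : Fintype.card ι ≤ n + 1 := by
  have := (Submodule.finrank_le (vectorSpan ℝ (Set.range (coeR ∘ p)))).trans_eq
    (Module.finrank_fin_fun ℝ)
  have := hp.card_le_finrank_succ
  omega

theorem exists_affineIndependent_of_mem_convexHull {n : ℕ} {V : Set (Fin n → ℤ)}
    {y : Fin n → ℝ} (hy : y ∈ convexHull ℝ (coeR '' V)) :
    ∃ (ι : Type) (_ : Fintype ι) (p : ι → Fin n → ℤ), AffineIndependent ℝ (coeR ∘ p) ∧
      Set.range p ⊆ V ∧ y ∈ convexHull ℝ (Set.range (coeR ∘ p)) := by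
  obtain ⟨ι, _, z, w, hzV, hz, hw0, hw1, hy⟩ := eq_pos_convex_span_of_mem_convexHull hy
  choose p hpV hpz using fun i => hzV (Set.mem_range_self i)
  have hpz : coeR ∘ p = z := funext hpz
  refine ⟨ι, inferInstance, p, hpz ▸ hz, Set.range_subset_iff.2 hpV, ?_⟩
  simpa [hpz] using (mem_smul_convexHull_range_iff z one_pos).2 ⟨w, fun i => (hw0 i).le, hw1, hy⟩

theorem isNormal_zero_smul {n : ℕ} (A : Set (Fin n → ℝ)) : IsNormal ((0 : ℝ) • A) := by
  intro k hk v hv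
  have hA : A.Nonempty := by
    by_contra hA
    simp [Set.not_nonempty_iff_eq_empty.1 hA] at hv
  rw [Set.zero_smul_set hA, smul_zero, Set.mem_zero, ← coeR_zero] at hv
  refine ⟨0, fun _ => by simp [Set.zero_smul_set hA], ?_⟩
  simp [coeR_injective hv]

theorem isNormal_of_forall_exists_isNormal {n : ℕ} {P : Set (Fin n → ℝ)}
    (h : ∀ k : ℕ, 1 ≤ k → ∀ v : Fin n → ℤ, coeR v ∈ (k : ℝ) • P →
      ∃ Q ⊆ P, IsNormal Q ∧ coeR v ∈ (k : ℝ) • Q) :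
    IsNormal P := by
  intro k hk v hv
  obtain ⟨Q, hQP, hQ, hvQ⟩ := h k hk v hv
  obtain ⟨w, hw, hwv⟩ := hQ k hk v hvQ
  exact ⟨w, fun j => hQP (hw j), hwv⟩

theorem statement7_general (n : ℕ) (V : Finset (Fin n → ℤ))
    (A : Set (Fin n → ℝ)) (hA : A = convexHull ℝ (coeR '' (V : Set (Fin n → ℤ)))) :
    IsNormal ((((n - 1 : ℕ) : ℝ)) • A) := by
  obtain hc | hc := Nat.eq_zero_or_pos (n - 1)
  · rw [hc, Nat.cast_zero]
    exact isNormal_zero_smul A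
  refine isNormal_of_forall_exists_isNormal fun k _ v hv => ?_
  rw [smul_smul] at hv
  obtain ⟨y, hy, hyv⟩ := hv
  obtain ⟨ι, _, p, hp, hpV, hyp⟩ := exists_affineIndependent_of_mem_convexHull (hA ▸ hy)
  have hsub : convexHull ℝ (Set.range (coeR ∘ p)) ⊆ A := by
    rw [hA, Set.range_comp]
    exact convexHull_mono (Set.image_mono hpV)
  refine ⟨_, Set.smul_set_mono hsub, isNormal_smul_convexHull hp hc ?_, ?_⟩
  · have := card_le_of_affineIndependent hp
    omega
  · rw [smul_smul]
    exact ⟨y, hyp, hyv⟩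

/-- Let `A ⊆ ℝⁿ` be a lattice polytope (the convex hull of a finite
set of lattice points) of dimension `n`, with `n ≥ 1`. Then the dilate `(n−1)·A`
is normal. -/
theorem statement7 (n : ℕ) (hn : 1 ≤ n) (V : Finset (Fin n → ℤ))
    (A : Set (Fin n → ℝ)) (hA : A = convexHull ℝ (coeR '' (V : Set (Fin n → ℤ))))
    (hfull : affineSpan ℝ A = ⊤) :
    IsNormal ((((n - 1 : ℕ) : ℝ)) • A) :=
  statement7_general n V A hA
end
end

section
/- Let I be an ideal of ℂ[x₁,…,xₙ] such that the quotient ring R = ℂ[x₁,…,xₙ]/I is a finite-dimensional ℂ-vector space, and let f ∈ ℂ[x₁,…,xₙ]. Let M_f : R → R be the ℂ-linear multiplication operator M_f(ḡ) = f·g (classes taken modulo I). Then a complex number λ is an eigenvalue of M_f if and only if there exists a point ξ ∈ ℂⁿ in the zero locus V(I) = {ξ ∈ ℂⁿ : g(ξ) = 0 for all g ∈ I} with f(ξ) = λ. -/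
/-
The eigenvalues of `M_f` form the spectrum of `f̄` in the finite-dimensional algebra `R`.
Now `λ - f̄` is a nonunit iff it lies in a maximal ideal `m`; the residue field `R ⧸ m` is finite over
the algebraically closed field `ℂ`, hence equal to `ℂ`, so this happens iff some `ℂ`-algebra
homomorphism `R → ℂ` sends `f̄` to `λ`. Such homomorphisms are exactly the evaluations at the
points of `V(I)`.
-/

open MvPolynomial

theorem LinearMap.spectrum_mulLeft {R A : Type*} [CommRing R] [Ring A] [Algebra R A] (a : A) :
    spectrum R (LinearMap.mulLeft R a) = spectrum R a := by
  ext r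
  rw [spectrum.mem_iff, spectrum.mem_iff, ← Algebra.lmul_isUnit_iff (R := R) (A := A), map_sub,
    AlgHom.commutes]
  rfl

theorem exists_algHom_apply_eq_of_mem_spectrum {K A : Type*} [Field K] [IsAlgClosed K]
    [CommRing A] [Algebra K A] [Algebra.IsIntegral K A] {a : A} {μ : K}
    (h : μ ∈ spectrum K a) : ∃ φ : A →ₐ[K] K, φ a = μ := by
  obtain ⟨m, hm, hmem⟩ := exists_max_ideal_of_mem_nonunits (mem_nonunits_iff.2 h)
  let := Ideal.Quotient.field m
  let φ : A →ₐ[K] K := (IsAlgClosed.lift : A ⧸ m →ₐ[K] K).comp (Ideal.Quotient.mkₐ K m)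
  have hφ : φ (algebraMap K A μ - a) = 0 := by
    simp [φ, Ideal.Quotient.eq_zero_iff_mem.2 hmem]
  rw [map_sub, AlgHom.commutes, Algebra.algebraMap_self, RingHom.id_apply, sub_eq_zero] at hφ
  exact ⟨φ, hφ.symm⟩

theorem Module.End.hasEigenvalue_mulLeft_iff {K A : Type*} [Field K] [IsAlgClosed K]
    [CommRing A] [Algebra K A] [FiniteDimensional K A] (a : A) (μ : K) :
    HasEigenvalue (LinearMap.mulLeft K a) μ ↔ ∃ φ : A →ₐ[K] K, φ a = μ := by
  rw [hasEigenvalue_iff_mem_spectrum, LinearMap.spectrum_mulLeft]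
  exact ⟨exists_algHom_apply_eq_of_mem_spectrum, fun ⟨φ, hφ⟩ => hφ ▸ AlgHom.apply_mem_spectrum φ a⟩

theorem MvPolynomial.exists_quotient_algHom_apply_mk_iff {R σ : Type*} [CommRing R]
    (I : Ideal (MvPolynomial σ R)) (f : MvPolynomial σ R) (r : R) :
    (∃ φ : (MvPolynomial σ R ⧸ I) →ₐ[R] R, φ (Ideal.Quotient.mk I f) = r) ↔
      ∃ ξ : σ → R, (∀ g ∈ I, eval ξ g = 0) ∧ eval ξ f = r := by
  constructor
  · rintro ⟨φ, rfl⟩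
    let ξ : σ → R := fun i => φ (Ideal.Quotient.mk I (X i))
    have hφ : φ.comp (Ideal.Quotient.mkₐ R I) = aeval ξ := algHom_ext fun i => (aeval_X ξ i).symm
    have heval (g : MvPolynomial σ R) : eval ξ g = φ (Ideal.Quotient.mk I g) := by
      rw [← coe_aeval_eq_eval, ← hφ]
      rfl
    refine ⟨ξ, fun g hg => ?_, heval f⟩
    rw [heval, Ideal.Quotient.eq_zero_iff_mem.2 hg, map_zero]
  · rintro ⟨ξ, hI, rfl⟩
    exact ⟨Ideal.Quotient.liftₐ I (aeval ξ) hI, rfl⟩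

/-- **Eigenvalue Theorem.** Let `I` be an ideal of `ℂ[x₁,…,xₙ]` with
finite-dimensional quotient `R = ℂ[x₁,…,xₙ]/I`, and `f` a polynomial. A complex
number `λ` is an eigenvalue of the multiplication operator `M_f : R → R`,
`M_f(ḡ) = f·g`, if and only if `λ = f(ξ)` for some point `ξ` of the zero locus
`V(I)`. -/
theorem statement8 (n : ℕ) (I : Ideal (MvPolynomial (Fin n) ℂ))
    [FiniteDimensional ℂ (MvPolynomial (Fin n) ℂ ⧸ I)]
    (f : MvPolynomial (Fin n) ℂ) (lam : ℂ) :
    Module.End.HasEigenvalue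
      (LinearMap.mulLeft ℂ (Ideal.Quotient.mk I f) :
        Module.End ℂ (MvPolynomial (Fin n) ℂ ⧸ I)) lam ↔
    ∃ ξ : Fin n → ℂ, (∀ g ∈ I, MvPolynomial.eval ξ g = 0) ∧
      MvPolynomial.eval ξ f = lam := by
  rw [Module.End.hasEigenvalue_mulLeft_iff, exists_quotient_algHom_apply_mk_iff]
end

section
/- Let I be a radical ideal of ℂ[x₁,…,xₙ] such that R = ℂ[x₁,…,xₙ]/I is a finite-dimensional ℂ-vector space of dimension N, and suppose the classes of monomials m₀ = 1, m₁ = x₁, …, mₙ = xₙ, m_{n+1}, …, m_{N−1} form a ℂ-basis B of R. Let f = α₁x₁ + … + αₙxₙ be a linear form taking pairwise distinct values at the points of V(I), and let M be the matrix of the multiplication operator M_f(ḡ) = f·g on R with respect to the basis B. Then: (1) for every eigenvector v = (v₀, v₁, …, v_{N−1}) of the transpose Mᵀ (i.e., left eigenvector of M) with v₀ = 1, the point (v₁, …, vₙ) belongs to V(I); and (2) for every ξ ∈ V(I) there exists an eigenvector v of Mᵀ with v₀ = 1 and (v₁, …, vₙ) = ξ, namely the vector of values (m₀(ξ), m₁(ξ),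 …, m_{N−1}(ξ)), which Mᵀ scales by the eigenvalue f(ξ). -/
/-!
Since `I` is radical, the Nullstellensatz shows that the characters `R →ₐ[ℂ] ℂ`, i.e. the
evaluations at the points of `V(I)`, separate the elements of `R`; being linearly independent
there are at most `dim R` of them, so evaluation is an algebra isomorphism `R ≃ ℂ^{V(I)}`.
A vector `v` corresponds to the functional `φ` on `R` with `φ(mᵢ) = vᵢ`, and `Mᵀv = λv` says
`φ(f·r) = λ φ(r)`. On `ℂ^{V(I)}` the indicator functions are eigenvectors of multiplication by
`f` with the pairwise distinct eigenvalues `f(ξ)`, so such a `φ` with `φ(1) = 1` is the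
evaluation at a single point `ξ`, and then `vᵢ₊₁ = φ(xᵢ) = ξᵢ`.
-/

open Module Matrix

theorem LinearMap.exists_eq_proj_of_map_mul_eq_mul_map {K S : Type*} [CommRing K] [IsDomain K]
    [Fintype S] [DecidableEq S] {a : S → K} (ha : Function.Injective a)
    {φ : (S → K) →ₗ[K] K} {μ : K} (hφ : ∀ r, φ (a * r) = μ * φ r) (h1 : φ 1 = 1) :
    ∃ s, φ = LinearMap.proj s := by
  have heigen : ∀ s, (a s - μ) * φ (Pi.single s 1) = 0 := fun s => by
    have : a * Pi.single s 1 = a s • Pi.single s (1 : K) := by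
      ext t; by_cases h : t = s <;> simp [h]
    rw [sub_mul, ← smul_eq_mul, ← map_smul, ← this, hφ, sub_self]
  have hsum : ∑ s, φ (Pi.single s 1) = 1 :=
    (map_sum φ _ _).symm.trans ((congrArg φ (Finset.univ_sum_single 1)).trans h1)
  obtain ⟨s₀, hs₀⟩ : ∃ s₀, φ (Pi.single s₀ 1) ≠ 0 := by
    by_contra! h
    simp [h] at hsum
  have hμ : a s₀ = μ := sub_eq_zero.mp ((mul_eq_zero.mp (heigen s₀)).resolve_right hs₀)
  have hvanish : ∀ s ≠ s₀, φ (Pi.single s 1) = 0 := fun s hs =>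
    (mul_eq_zero.mp (heigen s)).resolve_left (sub_ne_zero.mpr (hμ ▸ ha.ne hs))
  have hs₀1 : φ (Pi.single s₀ 1) = 1 :=
    (Finset.sum_eq_single s₀ (fun s _ hs => hvanish s hs) (by simp)).symm.trans hsum
  refine ⟨s₀, LinearMap.pi_ext' fun s => LinearMap.ext_ring ?_⟩
  by_cases hs : s = s₀
  · subst hs; simpa using hs₀1
  · simpa [Pi.single_apply, Ne.symm hs] using hvanish s hs

theorem Matrix.transpose_toMatrix_mulVec {K M ι : Type*} [CommRing K] [AddCommGroup M]
    [Module K M] [Fintype ι] [DecidableEq ι] (B : Basis ι K M) (T : M →ₗ[K] M)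
    (φ : M →ₗ[K] K) :
    (LinearMap.toMatrix B B T)ᵀ *ᵥ (fun i => φ (B i)) = fun j => φ (T (B j)) := by
  ext j
  simp only [mulVec, dotProduct, transpose_apply, LinearMap.toMatrix_apply]
  conv_rhs => rw [← B.sum_repr (T (B j))]
  simp only [map_sum, map_smul, smul_eq_mul, mul_comm]

section Characters

variable {K A : Type*} [Field K] [CommRing A] [Algebra K A] [FiniteDimensional K A]

theorem bijective_pi_algHom_of_separating [Fintype (A →ₐ[K] K)]
    (hsep : ∀ r : A, (∀ χ : A →ₐ[K] K, χ r = 0) → r = 0) :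
    Function.Bijective (AlgHom.pi fun χ : A →ₐ[K] K => χ) := by
  have hinj : Function.Injective (AlgHom.pi fun χ : A →ₐ[K] K => χ) :=
    (injective_iff_map_eq_zero _).2 fun r hr => hsep r fun χ => congrFun hr χ
  have hcard : finrank K A = finrank K ((A →ₐ[K] K) → K) := by
    refine le_antisymm
      (LinearMap.finrank_le_finrank_of_injective (f := (AlgHom.pi _).toLinearMap) hinj) ?_
    simpa [Nat.card_eq_fintype_card] using card_algHom_le_finrank K A K
  exact ⟨hinj, (LinearMap.injective_iff_surjective_of_finrank_eq_finrank
    (f := (AlgHom.pi _).toLinearMap) hcard).1 hinj⟩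

theorem exists_algHom_eq_of_map_mul_eq_mul_map
    (hsep : ∀ r : A, (∀ χ : A →ₐ[K] K, χ r = 0) → r = 0) {a : A}
    (ha : Function.Injective fun χ : A →ₐ[K] K => χ a) {φ : A →ₗ[K] K} {μ : K}
    (hφ : ∀ r, φ (a * r) = μ * φ r) (h1 : φ 1 = 1) :
    ∃ χ : A →ₐ[K] K, φ = χ.toLinearMap := by
  classical
  have := Fintype.ofFinite (A →ₐ[K] K)
  let e := AlgEquiv.ofBijective _ (bijective_pi_algHom_of_separating hsep)
  obtain ⟨χ, hχ⟩ := LinearMap.exists_eq_proj_of_map_mul_eq_mul_map (a := e a) ha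
    (φ := φ ∘ₗ e.symm.toLinearMap) (μ := μ) (fun r => by simp [hφ]) (by simp [h1])
  refine ⟨χ, LinearMap.ext fun r => ?_⟩
  simpa [e] using LinearMap.congr_fun hχ (e r)

end Characters

namespace MvPolynomial

variable {σ K : Type*} [Field K] {I : Ideal (MvPolynomial σ K)}

noncomputable def quotientEval (ξ : σ → K) (hξ : ∀ g ∈ I, eval ξ g = 0) :
    (MvPolynomial σ K ⧸ I) →ₐ[K] K :=
  Ideal.Quotient.liftₐ I (aeval ξ) hξ

@[simp]
theorem quotientEval_mk (ξ : σ → K) (hξ : ∀ g ∈ I, eval ξ g = 0) (g : MvPolynomial σ K) :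
    quotientEval ξ hξ (Ideal.Quotient.mk I g) = eval ξ g :=
  rfl

theorem algHom_quotient_mk_eq_eval (χ : (MvPolynomial σ K ⧸ I) →ₐ[K] K) (g : MvPolynomial σ K) :
    χ (Ideal.Quotient.mk I g) = eval (fun i => χ (Ideal.Quotient.mk I (X i))) g :=
  DFunLike.congr_fun (aeval_unique (χ.comp (Ideal.Quotient.mkₐ K I))) g

theorem eval_algHom_quotient_mk_X_eq_zero (χ : (MvPolynomial σ K ⧸ I) →ₐ[K] K)
    {g : MvPolynomial σ K} (hg : g ∈ I) : eval (fun i => χ (Ideal.Quotient.mk I (X i))) g = 0 := by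
  rw [← algHom_quotient_mk_eq_eval, Ideal.Quotient.eq_zero_iff_mem.2 hg, map_zero]

theorem quotient_eq_zero_of_forall_algHom [Finite σ] [IsAlgClosed K] (hI : I.IsRadical)
    (r : MvPolynomial σ K ⧸ I) (hr : ∀ χ : (MvPolynomial σ K ⧸ I) →ₐ[K] K, χ r = 0) : r = 0 := by
  obtain ⟨g, rfl⟩ := Ideal.Quotient.mk_surjective r
  rw [Ideal.Quotient.eq_zero_iff_mem, ← hI.radical,
    ← vanishingIdeal_zeroLocus_eq_radical (K := K) I]
  exact fun ξ hξ => hr (quotientEval ξ hξ)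

theorem injective_algHom_quotient_mk {f : MvPolynomial σ K}
    (hf : ∀ ξ η : σ → K, (∀ g ∈ I, eval ξ g = 0) → (∀ g ∈ I, eval η g = 0) →
      eval ξ f = eval η f → ξ = η) :
    Function.Injective fun χ : (MvPolynomial σ K ⧸ I) →ₐ[K] K => χ (Ideal.Quotient.mk I f) := by
  intro χ₁ χ₂ h
  have hpt := hf _ _ (fun _ => eval_algHom_quotient_mk_X_eq_zero χ₁)
    (fun _ => eval_algHom_quotient_mk_X_eq_zero χ₂)
    ((algHom_quotient_mk_eq_eval χ₁ f).symm.trans (h.trans (algHom_quotient_mk_eq_eval χ₂ f)))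
  exact Ideal.Quotient.algHom_ext K (MvPolynomial.algHom_ext fun i => congrFun hpt i)

end MvPolynomial

open Matrix in
/-- **Eigenvector Theorem.** Let `I` be a radical ideal of
`ℂ[x₁,…,xₙ]` with `R = ℂ[x₁,…,xₙ]/I` of finite dimension `N`, and suppose the
classes of the monomials `m₀ = 1, m₁ = x₁, …, mₙ = xₙ, m_{n+1}, …, m_{N−1}` form a
basis `B` of `R`. Let `f = α₁x₁ + … + αₙxₙ` take pairwise distinct values on
`V(I)` and let `M` be the matrix of the multiplication operator `M_f` in the
basis `B`. Then (1) every eigenvector `v` of `Mᵀ` with `v₀ = 1` yields a point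
`(v₁,…,vₙ) ∈ V(I)`, and (2) every `ξ ∈ V(I)` arises this way, namely from the
vector of values `(m₀(ξ),…,m_{N−1}(ξ))`, which `Mᵀ` scales by `f(ξ)`. -/
theorem statement9 (n N : ℕ) (hnN : n + 1 ≤ N)
    (I : Ideal (MvPolynomial (Fin n) ℂ)) (hrad : I.IsRadical)
    (m : Fin N → MvPolynomial (Fin n) ℂ)
    (hm0 : m ⟨0, by omega⟩ = 1)
    (hmX : ∀ i : Fin n, m ⟨(i : ℕ) + 1, by have := i.isLt; omega⟩ = MvPolynomial.X i)
    (B : Module.Basis (Fin N) ℂ (MvPolynomial (Fin n) ℂ ⧸ I))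
    (hB : ∀ i, B i = Ideal.Quotient.mk I (m i))
    (f : MvPolynomial (Fin n) ℂ)
    (hdistinct : ∀ ξ η : Fin n → ℂ, (∀ g ∈ I, MvPolynomial.eval ξ g = 0) →
      (∀ g ∈ I, MvPolynomial.eval η g = 0) →
      MvPolynomial.eval ξ f = MvPolynomial.eval η f → ξ = η) :
    -- `M` is the matrix of the multiplication operator `M_f(ḡ) = f·g` in basis `B`
    let M : Matrix (Fin N) (Fin N) ℂ :=
      LinearMap.toMatrix B B (LinearMap.mulLeft ℂ (Ideal.Quotient.mk I f))
    -- (1) every eigenvector `v` of `Mᵀ` (left eigenvector of `M`) with `v₀ = 1`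
    -- yields a point `(v₁,…,vₙ)` of `V(I)`
    (∀ (lam : ℂ) (v : Fin N → ℂ), M.transpose *ᵥ v = lam • v →
      v ⟨0, by omega⟩ = 1 →
      ∀ g ∈ I, MvPolynomial.eval
        (fun i : Fin n => v ⟨(i : ℕ) + 1, by have := i.isLt; omega⟩) g = 0) ∧
    -- (2) for every `ξ ∈ V(I)`, the vector of values `v = (m₀(ξ),…,m_{N−1}(ξ))`
    -- is an eigenvector of `Mᵀ` with eigenvalue `f(ξ)`, `v₀ = 1`, and `(v₁,…,vₙ) = ξ`
    (∀ ξ : Fin n → ℂ, (∀ g ∈ I, MvPolynomial.eval ξ g = 0) →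
      (M.transpose *ᵥ (fun i => MvPolynomial.eval ξ (m i))
          = MvPolynomial.eval ξ f • fun i => MvPolynomial.eval ξ (m i)) ∧
      MvPolynomial.eval ξ (m ⟨0, by omega⟩) = 1 ∧
      ∀ i : Fin n,
        MvPolynomial.eval ξ (m ⟨(i : ℕ) + 1, by have := i.isLt; omega⟩) = ξ i) := by
  intro M
  have hM (φ : (MvPolynomial (Fin n) ℂ ⧸ I) →ₗ[ℂ] ℂ) :
      Mᵀ *ᵥ (fun i => φ (B i)) = fun j => φ (Ideal.Quotient.mk I f * B j) :=
    transpose_toMatrix_mulVec B _ φ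
  refine ⟨fun lam v hv hv0 g hg => ?_, fun ξ hξ => ⟨?_, by simp [hm0], fun i => by simp [hmX]⟩⟩
  · have : Module.Finite ℂ (MvPolynomial (Fin n) ℂ ⧸ I) := Module.Finite.of_basis B
    obtain ⟨φ, hφB⟩ : ∃ φ : (MvPolynomial (Fin n) ℂ ⧸ I) →ₗ[ℂ] ℂ, ∀ i, φ (B i) = v i :=
      ⟨B.constr ℂ v, B.constr_basis ℂ v⟩
    have hφ (r) : φ (Ideal.Quotient.mk I f * r) = lam * φ r := by
      refine LinearMap.congr_fun (B.ext (f₁ := φ ∘ₗ LinearMap.mulLeft ℂ _) (f₂ := lam • φ)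
        fun j => ?_) r
      simpa [hφB, hv] using (congrFun (hM φ) j).symm
    have h1 : φ 1 = 1 := by
      rw [← map_one (Ideal.Quotient.mk I), ← hm0, ← hB, hφB, hv0]
    obtain ⟨χ, hχ⟩ := exists_algHom_eq_of_map_mul_eq_mul_map
      (MvPolynomial.quotient_eq_zero_of_forall_algHom hrad)
      (MvPolynomial.injective_algHom_quotient_mk hdistinct) hφ h1
    have hpt : (fun i : Fin n => v ⟨(i : ℕ) + 1, by omega⟩) =
        fun i => χ (Ideal.Quotient.mk I (MvPolynomial.X i)) := by
      funext i
      rw [← hφB, hχ, hB, hmX, AlgHom.toLinearMap_apply]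
    rw [hpt]
    exact MvPolynomial.eval_algHom_quotient_mk_X_eq_zero χ hg
  · set χ := MvPolynomial.quotientEval ξ hξ
    have hχB : (fun i => MvPolynomial.eval ξ (m i)) = fun i => χ.toLinearMap (B i) := by
      simp [χ, hB]
    rw [hχB, hM]
    ext j
    simp [χ, hB]
end

section
/- Let S_d ⊆ ℂ[x₁,x₂] denote the space of polynomials of total degree at most d, let f₁ = 1 − x₁x₂ and f₂ = 1 − x₂, and for an integer e ≥ 2 let Φ : S_{e−2} × S_{e−1} → S_e be the linear map Φ(g₁, g₂) = g₁·(1 − x₁x₂) + g₂·(1 − x₂). Then the classes of the monomials 1 and x₁^e in the quotient S_e/(im Φ) are linearly independent; in particular, the codimension of the image of Φ in S_e is at least 2, even though dim_ℂ ℂ[x₁,x₂]/⟨1 − x₁x₂, 1 − x₂⟩ = 1. -/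
/-!
Modulo `im Φ` two linear functionals vanish: evaluation at `(1, 1)`, which kills both
generators, and the coefficient of `x₁ ^ e` (`X 0 ^ e` below), since `g₁` and `g₂` have degree
`< e` and the remaining parts `-x₁x₂g₁`, `-x₂g₂` are divisible by `x₂`. These two functionals
separate `1` and `x₁ ^ e`. On the other hand `x₁ ≡ x₂ ≡ 1` modulo `⟨1 - x₁x₂, 1 - x₂⟩`, so
evaluation at `(1, 1)` identifies the quotient ring with `ℂ`.
-/

open MvPolynomial Module

section Coefficients

variable {σ R : Type*} [CommRing R] {i j : σ}

theorem coeff_single_eq_zero_of_X_dvd (hij : i ≠ j) {p : MvPolynomial σ R} (hp : X j ∣ p)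
    (n : ℕ) : coeff (Finsupp.single i n) p = 0 := by
  classical
  obtain ⟨q, rfl⟩ := hp
  simp [coeff_X_mul', hij.symm]

theorem coeff_single_mul_eq_zero (hij : i ≠ j) {f g : MvPolynomial σ R} (hf : X j ∣ f - 1)
    {n : ℕ} (hg : g.totalDegree < n) : coeff (Finsupp.single i n) (f * g) = 0 := by
  have hn : n ≠ 0 := by omega
  rw [show f * g = g + (f - 1) * g by ring, coeff_add,
    coeff_single_eq_zero_of_X_dvd hij (dvd_mul_of_dvd_left hf g), add_zero]
  exact coeff_eq_zero_of_totalDegree_lt (by simpa [Finsupp.support_single i hn] using hg)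

end Coefficients

section Quotient

variable {σ K : Type*} [Field K] {I : Ideal (MvPolynomial σ K)}

theorem finrank_quotient_eq_one_of_X_sub_C_mem (x : σ → K) (hX : ∀ i, X i - C (x i) ∈ I)
    (hI : ∀ p ∈ I, eval x p = 0) : finrank K (MvPolynomial σ K ⧸ I) = 1 := by
  let φ : (MvPolynomial σ K ⧸ I) →ₐ[K] K := Ideal.Quotient.liftₐ I (aeval x) hI
  have hψφ : (Algebra.ofId K _).comp φ = AlgHom.id K (MvPolynomial σ K ⧸ I) := by
    refine Ideal.Quotient.algHom_ext _ (algHom_ext fun i => ?_)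
    have hφ : φ (Ideal.Quotient.mk I (X i)) = x i := aeval_X x i
    simp only [AlgHom.comp_apply, Ideal.Quotient.mkₐ_eq_mk, hφ, Algebra.ofId_apply,
      AlgHom.id_apply, ← Ideal.Quotient.mk_algebraMap, algebraMap_eq, Ideal.Quotient.eq]
    simpa using I.neg_mem (hX i)
  rw [(AlgEquiv.ofAlgHom φ (Algebra.ofId K _) (by ext) hψφ).toLinearEquiv.finrank_eq,
    finrank_self]

end Quotient

theorem two_le_finrank_quotient_comap {K V : Type*} [Field K] [AddCommGroup V] [Module K V]
    {S N : Submodule K V} [FiniteDimensional K S] {x y : V} (hx : x ∈ S) (hy : y ∈ S)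
    (h : ∀ a b : K, a • x + b • y ∈ N → a = 0 ∧ b = 0) :
    2 ≤ finrank K (S ⧸ N.comap S.subtype) := by
  have hli : LinearIndependent K
      ![(N.comap S.subtype).mkQ ⟨x, hx⟩, (N.comap S.subtype).mkQ ⟨y, hy⟩] := by
    refine LinearIndependent.pair_iff.mpr fun a b hab => h a b ?_
    rwa [← map_smul, ← map_smul, ← map_add, Submodule.mkQ_apply,
      Submodule.Quotient.mk_eq_zero] at hab
  simpa using hli.fintype_card_le_finrank

section PhiImage

variable (R : Type*) [CommRing R]

noncomputable def phiImage (e : ℕ) : Submodule R (MvPolynomial (Fin 2) R) :=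
  Submodule.map (LinearMap.mulLeft R (1 - X 0 * X 1)) (restrictTotalDegree (Fin 2) R (e - 2)) +
    Submodule.map (LinearMap.mulLeft R (1 - X 1)) (restrictTotalDegree (Fin 2) R (e - 1))

variable {R}

theorem mem_phiImage {e : ℕ} {p : MvPolynomial (Fin 2) R} :
    p ∈ phiImage R e ↔ ∃ g₁ g₂ : MvPolynomial (Fin 2) R, g₁.totalDegree ≤ e - 2 ∧
      g₂.totalDegree ≤ e - 1 ∧ (1 - X 0 * X 1) * g₁ + (1 - X 1) * g₂ = p := by
  simp only [phiImage, Submodule.add_eq_sup, Submodule.mem_sup, Submodule.mem_map,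
    mem_restrictTotalDegree, LinearMap.mulLeft_apply]
  constructor
  · rintro ⟨_, ⟨g₁, hg₁, rfl⟩, _, ⟨g₂, hg₂, rfl⟩, rfl⟩
    exact ⟨g₁, g₂, hg₁, hg₂, rfl⟩
  · rintro ⟨g₁, g₂, hg₁, hg₂, rfl⟩
    exact ⟨_, ⟨g₁, hg₁, rfl⟩, _, ⟨g₂, hg₂, rfl⟩, rfl⟩

theorem eval_one_eq_zero_of_mem_phiImage {e : ℕ} {p : MvPolynomial (Fin 2) R}
    (hp : p ∈ phiImage R e) : eval 1 p = 0 := by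
  obtain ⟨g₁, g₂, -, -, rfl⟩ := mem_phiImage.mp hp
  simp

theorem coeff_X_pow_eq_zero_of_mem_phiImage {e : ℕ} (he : 0 < e) {p : MvPolynomial (Fin 2) R}
    (hp : p ∈ phiImage R e) : coeff (Finsupp.single 0 e) p = 0 := by
  obtain ⟨g₁, g₂, hg₁, hg₂, rfl⟩ := mem_phiImage.mp hp
  rw [coeff_add, coeff_single_mul_eq_zero (j := 1) (by decide) ?_ (by omega),
    coeff_single_mul_eq_zero (j := 1) (by decide) ?_ (by omega), add_zero]
  · exact ⟨-1, by ring⟩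
  · exact ⟨-X 0, by ring⟩

theorem eq_zero_of_smul_one_add_smul_X_pow_mem_phiImage {e : ℕ} (he : 0 < e) {a b : R}
    (h : a • (1 : MvPolynomial (Fin 2) R) + b • X 0 ^ e ∈ phiImage R e) : a = 0 ∧ b = 0 := by
  have hb : b = 0 := by
    have : (0 : Fin 2 →₀ ℕ) ≠ Finsupp.single 0 e := (Finsupp.single_ne_zero.mpr he.ne').symm
    simpa [X_pow_eq_monomial, coeff_one, this]
      using coeff_X_pow_eq_zero_of_mem_phiImage he h
  refine ⟨?_, hb⟩
  simpa [hb] using eval_one_eq_zero_of_mem_phiImage h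

end PhiImage

/-- Let `S_d ⊆ ℂ[x₁,x₂]` be the polynomials of total degree at
most `d`, and for `e ≥ 2` let `Φ : S_{e−2} × S_{e−1} → S_e` be
`Φ(g₁,g₂) = g₁·(1 − x₁x₂) + g₂·(1 − x₂)`. Then the classes of `1` and `x₁^e` in
`S_e/(im Φ)` are linearly independent; in particular the codimension of `im Φ`
in `S_e` is at least `2`, even though
`dim_ℂ ℂ[x₁,x₂]/⟨1 − x₁x₂, 1 − x₂⟩ = 1`. -/
theorem statement10 (e : ℕ) (he : 2 ≤ e) :
    -- the image of `Φ(g₁,g₂) = g₁·(1 − x₁x₂) + g₂·(1 − x₂)` on `S_{e−2} × S_{e−1}`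
    let ImPhi : Submodule ℂ (MvPolynomial (Fin 2) ℂ) :=
      Submodule.map
          (LinearMap.mulLeft ℂ (1 - MvPolynomial.X 0 * MvPolynomial.X 1))
          (MvPolynomial.restrictTotalDegree (Fin 2) ℂ (e - 2))
        + Submodule.map (LinearMap.mulLeft ℂ (1 - MvPolynomial.X 1))
            (MvPolynomial.restrictTotalDegree (Fin 2) ℂ (e - 1))
    -- `S_e`
    let Se : Submodule ℂ (MvPolynomial (Fin 2) ℂ) :=
      MvPolynomial.restrictTotalDegree (Fin 2) ℂ e
    -- the classes of `1` and `x₁^e` are linearly independent modulo `im Φ`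
    (∀ a b : ℂ,
      a • (1 : MvPolynomial (Fin 2) ℂ) + b • (MvPolynomial.X 0 : _) ^ e ∈ ImPhi →
        a = 0 ∧ b = 0) ∧
    -- in particular the codimension of `im Φ` in `S_e` is at least `2`
    2 ≤ Module.finrank ℂ (↥Se ⧸ (ImPhi.comap Se.subtype)) ∧
    -- even though `dim_ℂ ℂ[x₁,x₂]/⟨1 − x₁x₂, 1 − x₂⟩ = 1`
    Module.finrank ℂ (MvPolynomial (Fin 2) ℂ ⧸
      Ideal.span {(1 - MvPolynomial.X 0 * MvPolynomial.X 1 : MvPolynomial (Fin 2) ℂ),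
        (1 - MvPolynomial.X 1 : MvPolynomial (Fin 2) ℂ)}) = 1 := by
  intro ImPhi Se
  have hindep (a b : ℂ) (h : a • (1 : MvPolynomial (Fin 2) ℂ) + b • X 0 ^ e ∈ ImPhi) :
      a = 0 ∧ b = 0 :=
    eq_zero_of_smul_one_add_smul_X_pow_mem_phiImage (by omega) h
  refine ⟨hindep, two_le_finrank_quotient_comap ?_ ?_ hindep,
    finrank_quotient_eq_one_of_X_sub_C_mem 1 (Fin.forall_fin_two.mpr ⟨?_, ?_⟩)
    fun p hp => ?_⟩
  · simp [Se, mem_restrictTotalDegree]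
  · simp [Se, mem_restrictTotalDegree, totalDegree_X_pow]
  · exact Ideal.mem_span_pair.mpr ⟨-1, X 0, by simp; ring⟩
  · exact Ideal.mem_span_pair.mpr ⟨0, -1, by simp⟩
  · refine (Ideal.span_le (I := RingHom.ker (eval 1)).mpr ?_) hp
    rintro q (rfl | rfl) <;> simp
end

section
/- Let ℓ : ℝ^{n+1} × ℝ^{m+1} × ℝ^{s+1} → ℝ be a trilinear form (linear in each of its three arguments), and let (x, y, z) with ‖x‖ = ‖y‖ = ‖z‖ = 1 (Euclidean norms) be a local extremum of ℓ restricted to the product of unit spheres Sⁿ × Sᵐ × Sˢ = {(x, y, z) : ‖x‖ = ‖y‖ = ‖z‖ = 1}. Then ℓ(x_j·e_i − x_i·e_j, y, z) = 0 for all 0 ≤ i < j ≤ n, ℓ(x, y_j·e_i − y_i·e_j, z) = 0 for all 0 ≤ i < j ≤ m, and ℓ(x, y, z_j·e_i − z_i·e_j) = 0 for all 0 ≤ i < j ≤ s, where e_i denotes the i-th standard basis vector of the relevant Euclidean space. -/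
/-!
Fixing two of the three arguments, the trilinear form becomes a linear functional whose restriction
to a unit sphere has a local extremum at the remaining argument `x`. By the Lagrange multiplier
rule, such a functional is a multiple of `⟪x, ·⟫`, so it vanishes on `x⊥`; and the vector
`x j • e i - x i • e j` is orthogonal to `x`.
-/

open Metric
open scoped RealInnerProductSpace

section LinearFunctionalOnSphere

variable {E : Type*} [NormedAddCommGroup E] [InnerProductSpace ℝ E]

theorem IsLocalExtrOn.apply_eq_zero_of_inner_eq_zero [CompleteSpace E] {φ : StrongDual ℝ E}
    {x v : E} (hextr : IsLocalExtrOn φ (sphere 0 ‖x‖) x) (hx : x ≠ 0) (hv : ⟪x, v⟫ = 0) :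
    φ v = 0 := by
  have hsphere : sphere (0 : E) ‖x‖ = {u | ‖u‖ ^ 2 = ‖x‖ ^ 2} := by
    ext; simp
  rw [hsphere] at hextr
  obtain ⟨a, b, hab, hlagrange⟩ :=
    hextr.exists_multipliers_of_hasStrictFDerivAt_1d (hasStrictFDerivAt_norm_sq x)
      φ.hasStrictFDerivAt
  have hlagrange_apply (u : E) : a * (2 * ⟪x, u⟫) + b * φ u = 0 := by
    simpa using congr($hlagrange u)
  have hb : b ≠ 0 := by
    rintro rfl
    have ha : a = 0 := by simpa [hx] using hlagrange_apply x
    exact hab (by simp [ha])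
  simpa [hv, hb] using hlagrange_apply v

theorem IsLocalExtrOn.map_eq_zero_of_isLinearMap [FiniteDimensional ℝ E] {f : E → ℝ}
    (hf : IsLinearMap ℝ f) {x v : E} (hextr : IsLocalExtrOn f (sphere 0 ‖x‖) x) (hx : x ≠ 0)
    (hv : ⟪x, v⟫ = 0) : f v = 0 :=
  IsLocalExtrOn.apply_eq_zero_of_inner_eq_zero (φ := LinearMap.toContinuousLinearMap (hf.mk' f))
    hextr hx hv

end LinearFunctionalOnSphere

theorem EuclideanSpace.inner_smul_single_sub_smul_single_eq_zero {ι : Type*} [Fintype ι]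
    [DecidableEq ι] (x : EuclideanSpace ℝ ι) (i j : ι) :
    ⟪x, x j • EuclideanSpace.single i (1 : ℝ) - x i • EuclideanSpace.single j 1⟫ = 0 := by
  simp only [inner_sub_right, inner_smul_right, EuclideanSpace.inner_single_right]
  simp [mul_comm]

/-- Let `ℓ` be a trilinear form on
`ℝ^{n+1} × ℝ^{m+1} × ℝ^{s+1}` and let `(x,y,z)` with `‖x‖ = ‖y‖ = ‖z‖ = 1` be a
local extremum of `ℓ` restricted to the product of unit spheres. Then
`ℓ(x_j·e_i − x_i·e_j, y, z) = 0` for all `i < j`, and similarly in the second and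
third arguments. -/
theorem statement11 (n m s : ℕ)
    (ℓ : EuclideanSpace ℝ (Fin (n + 1)) → EuclideanSpace ℝ (Fin (m + 1)) →
      EuclideanSpace ℝ (Fin (s + 1)) → ℝ)
    -- `ℓ` is trilinear: linear in each of its three arguments
    (hℓ1 : ∀ y z, IsLinearMap ℝ (fun x => ℓ x y z))
    (hℓ2 : ∀ x z, IsLinearMap ℝ (fun y => ℓ x y z))
    (hℓ3 : ∀ x y, IsLinearMap ℝ (fun z => ℓ x y z))
    (x : EuclideanSpace ℝ (Fin (n + 1))) (y : EuclideanSpace ℝ (Fin (m + 1)))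
    (z : EuclideanSpace ℝ (Fin (s + 1)))
    (hx : ‖x‖ = 1) (hy : ‖y‖ = 1) (hz : ‖z‖ = 1)
    -- `(x,y,z)` is a local extremum of `ℓ` on the product of unit spheres
    (hext :
      IsLocalMaxOn
        (fun p : EuclideanSpace ℝ (Fin (n + 1)) × EuclideanSpace ℝ (Fin (m + 1)) ×
            EuclideanSpace ℝ (Fin (s + 1)) => ℓ p.1 p.2.1 p.2.2)
        {p | ‖p.1‖ = 1 ∧ ‖p.2.1‖ = 1 ∧ ‖p.2.2‖ = 1} (x, y, z) ∨
      IsLocalMinOn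
        (fun p : EuclideanSpace ℝ (Fin (n + 1)) × EuclideanSpace ℝ (Fin (m + 1)) ×
            EuclideanSpace ℝ (Fin (s + 1)) => ℓ p.1 p.2.1 p.2.2)
        {p | ‖p.1‖ = 1 ∧ ‖p.2.1‖ = 1 ∧ ‖p.2.2‖ = 1} (x, y, z)) :
    (∀ i j : Fin (n + 1), i < j →
      ℓ (x j • EuclideanSpace.single i (1 : ℝ) - x i • EuclideanSpace.single j 1) y z
        = 0) ∧
    (∀ i j : Fin (m + 1), i < j →
      ℓ x (y j • EuclideanSpace.single i (1 : ℝ) - y i • EuclideanSpace.single j 1) z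
        = 0) ∧
    (∀ i j : Fin (s + 1), i < j →
      ℓ x y (z j • EuclideanSpace.single i (1 : ℝ) - z i • EuclideanSpace.single j 1)
        = 0) := by
  have hextr : IsLocalExtrOn _ _ (x, y, z) := hext.elim IsMaxFilter.isExtr IsMinFilter.isExtr
  refine ⟨fun i j _ => ?_, fun i j _ => ?_, fun i j _ => ?_⟩
  · refine IsLocalExtrOn.map_eq_zero_of_isLinearMap (hℓ1 y z) ?_
      (norm_ne_zero_iff.1 (by simp [hx]))
      (EuclideanSpace.inner_smul_single_sub_smul_single_eq_zero x i j)
    exact hextr.comp_continuousOn (fun u => (u, y, z))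
      (fun u hu => ⟨by simpa [hx] using hu, hy, hz⟩) (by fun_prop) (by simp)
  · refine IsLocalExtrOn.map_eq_zero_of_isLinearMap (hℓ2 x z) ?_
      (norm_ne_zero_iff.1 (by simp [hy]))
      (EuclideanSpace.inner_smul_single_sub_smul_single_eq_zero y i j)
    exact hextr.comp_continuousOn (fun u => (x, u, z))
      (fun u hu => ⟨hx, by simpa [hy] using hu, hz⟩) (by fun_prop) (by simp)
  · refine IsLocalExtrOn.map_eq_zero_of_isLinearMap (hℓ3 x y) ?_
      (norm_ne_zero_iff.1 (by simp [hz]))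
      (EuclideanSpace.inner_smul_single_sub_smul_single_eq_zero z i j)
    exact hextr.comp_continuousOn (fun u => (x, y, u))
      (fun u hu => ⟨hx, hy, by simpa [hz] using hu⟩) (by fun_prop) (by simp)
end
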